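/- arXiv:1503.05828 — 2 statements merged into one kernel-verified Lean document; each statement's English description precedes it below -/
import Mathlib

section
/- For every real ν ≥ 0 and every x > 0, the modified Bessel functions of the first kind satisfy I_ν(x) ≥ I_{ν+1}(x); consequently the ultraspherical modified Bessel functions satisfy i_l(x) ≥ i_{l+1}(x) for all l ∈ ℕ and x > 0. -/
/-- The modified Bessel function of the first kind,
`I_ν(x) = Σ_{m=0}^∞ (x/2)^{2m+ν} / (m! Γ(m+ν+1))`. -/
noncomputable def besselI (ν : ℝ) (x : ℝ) : ℝ :=
  ∑' m : ℕ, (x / 2) ^ (2 * (m : ℝ) + ν) / (m.factorial * Real.Gamma (ν + m + 1))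

/-- The ultraspherical modified Bessel function `i_l(z) = z^{1−N/2} I_{N/2−1+l}(z)`. -/
noncomputable def ultraI (N : ℕ) (l : ℕ) (z : ℝ) : ℝ :=
  z ^ ((1 : ℝ) - N / 2) * besselI ((N : ℝ) / 2 - 1 + l) z

/-!
With `s = x / 2`, the difference `(x / 2) ^ (-ν) (I_ν(x) - I_{ν+1}(x))` is a power series
`F(s) = Σ fₙ sⁿ` whose coefficients interleave those of `I_ν` and `-I_{ν+1}`. Although `F`
alternates in sign, `2F + F'` has nonnegative coefficients (the odd ones even vanish, by the
recurrence `Γ(z + 1) = z Γ(z)`). Since `(e^{2s} F)' = e^{2s} (2F + F')`, every coefficient of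
`e^{2s} F` is nonnegative, hence `e^{2s} F(s) ≥ 0` for `s ≥ 0`.
-/

open PowerSeries Finset

namespace PowerSeries

theorem derivative_rescale_exp (c : ℝ) :
    d⁄dX ℝ (rescale c (exp ℝ)) = C c * rescale c (exp ℝ) := by
  ext n
  rw [coeff_derivative, coeff_C_mul, coeff_rescale, coeff_rescale, coeff_exp, coeff_exp,
    Nat.factorial_succ]
  push_cast
  field_simp
  ring

theorem coeff_mul_nonneg {F G : ℝ⟦X⟧} (hF : ∀ n, 0 ≤ coeff n F) (hG : ∀ n, 0 ≤ coeff n G)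
    (n : ℕ) : 0 ≤ coeff n (F * G) := by
  rw [coeff_mul]
  exact sum_nonneg fun p _ => mul_nonneg (hF p.1) (hG p.2)

theorem coeff_rescale_exp_nonneg {c : ℝ} (hc : 0 ≤ c) (n : ℕ) :
    0 ≤ coeff n (rescale c (exp ℝ)) := by
  rw [coeff_rescale, coeff_exp]
  push_cast
  positivity

theorem coeff_rescale_exp_mul_nonneg {c : ℝ} (hc : 0 ≤ c) {F : ℝ⟦X⟧}
    (h₀ : 0 ≤ constantCoeff F) (hF : ∀ n, 0 ≤ coeff n (C c * F + d⁄dX ℝ F)) :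
    ∀ n, 0 ≤ coeff n (rescale c (exp ℝ) * F)
  | 0 => by simpa [coeff_mul, coeff_rescale] using h₀
  | n + 1 => by
    have hderiv : d⁄dX ℝ (rescale c (exp ℝ) * F) = rescale c (exp ℝ) * (C c * F + d⁄dX ℝ F) := by
      rw [Derivation.leibniz, derivative_rescale_exp, smul_eq_mul, smul_eq_mul]
      ring
    have h := coeff_mul_nonneg (coeff_rescale_exp_nonneg hc) hF n
    rw [← hderiv, coeff_derivative] at h
    exact nonneg_of_mul_nonneg_left h (by positivity)

theorem summable_norm_coeff_rescale_exp_mul_pow (c s : ℝ) :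
    Summable fun n => ‖coeff n (rescale c (exp ℝ)) * s ^ n‖ :=
  (Real.summable_pow_div_factorial |c * s|).congr fun n => by
    rw [coeff_rescale, coeff_exp]
    simp [abs_mul, mul_pow, div_eq_mul_inv]
    ring

theorem hasSum_coeff_rescale_exp_mul_pow (c s : ℝ) :
    HasSum (fun n => coeff n (rescale c (exp ℝ)) * s ^ n) (Real.exp (c * s)) := by
  have h : HasSum (fun n => (c * s) ^ n / n.factorial) (Real.exp (c * s)) := by
    rw [Real.exp_eq_exp_ℝ]
    exact NormedSpace.expSeries_div_hasSum_exp (c * s)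
  convert h using 2 with n
  rw [coeff_rescale, coeff_exp]
  push_cast
  ring

theorem tsum_coeff_rescale_exp_mul_mul_pow (c s : ℝ) {F : ℝ⟦X⟧}
    (hF : Summable fun n => ‖coeff n F * s ^ n‖) :
    ∑' n, coeff n (rescale c (exp ℝ) * F) * s ^ n =
      Real.exp (c * s) * ∑' n, coeff n F * s ^ n := by
  rw [← (hasSum_coeff_rescale_exp_mul_pow c s).tsum_eq,
    tsum_mul_tsum_eq_tsum_sum_antidiagonal_of_summable_norm
      (summable_norm_coeff_rescale_exp_mul_pow c s) hF]
  refine tsum_congr fun n => ?_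
  rw [coeff_mul, sum_mul]
  refine sum_congr rfl fun p hp => ?_
  rw [← mem_antidiagonal.mp hp, pow_add]
  ring

theorem tsum_coeff_mul_pow_nonneg {c s : ℝ} (hc : 0 ≤ c) (hs : 0 ≤ s) {F : ℝ⟦X⟧}
    (h₀ : 0 ≤ constantCoeff F) (hF : ∀ n, 0 ≤ coeff n (C c * F + d⁄dX ℝ F))
    (hsum : Summable fun n => ‖coeff n F * s ^ n‖) :
    0 ≤ ∑' n, coeff n F * s ^ n := by
  have h : 0 ≤ Real.exp (c * s) * ∑' n, coeff n F * s ^ n := by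
    rw [← tsum_coeff_rescale_exp_mul_mul_pow c s hsum]
    exact tsum_nonneg fun n =>
      mul_nonneg (coeff_rescale_exp_mul_nonneg hc h₀ hF n) (pow_nonneg hs n)
  exact nonneg_of_mul_nonneg_right h (Real.exp_pos _)

end PowerSeries

noncomputable def besselICoeff (ν : ℝ) (m : ℕ) : ℝ :=
  (m.factorial * Real.Gamma (ν + m + 1))⁻¹

theorem besselI_eq_rpow_mul_tsum (ν : ℝ) {x : ℝ} (hx : 0 < x) :
    besselI ν x = (x / 2) ^ ν * ∑' m : ℕ, besselICoeff ν m * (x / 2) ^ (2 * m) := by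
  rw [besselI, ← tsum_mul_left]
  refine tsum_congr fun m => ?_
  rw [Real.rpow_add (by positivity), besselICoeff, div_eq_mul_inv]
  norm_cast
  ring

theorem besselICoeff_pos {ν : ℝ} (hν : -1 < ν) (m : ℕ) : 0 < besselICoeff ν m := by
  have := Real.Gamma_pos_of_pos (show 0 < ν + m + 1 by linarith [(m.cast_nonneg : (0 : ℝ) ≤ m)])
  unfold besselICoeff
  positivity

theorem besselICoeff_add_one {ν : ℝ} {m : ℕ} (h : ν + m + 1 ≠ 0) :
    besselICoeff (ν + 1) m = besselICoeff ν m / (ν + m + 1) := by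
  rw [besselICoeff, besselICoeff, add_right_comm ν 1, Real.Gamma_add_one h]
  field_simp

theorem besselICoeff_succ (ν : ℝ) (m : ℕ) :
    besselICoeff ν (m + 1) = besselICoeff (ν + 1) m / (m + 1) := by
  rw [besselICoeff, besselICoeff, Nat.factorial_succ]
  push_cast
  rw [add_right_comm ν 1, add_assoc ν (m : ℝ) 1]
  field_simp

theorem besselICoeff_le {ν : ℝ} (hν : 0 ≤ ν) :
    ∀ m : ℕ, besselICoeff ν m ≤ besselICoeff ν 0 / m.factorial
  | 0 => by simp
  | m + 1 => by
    have hpos := besselICoeff_pos (by linarith) m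
    have hle : besselICoeff ν (m + 1) ≤ besselICoeff ν m / (m + 1) := by
      rw [besselICoeff_succ, besselICoeff_add_one (by positivity)]
      gcongr
      exact div_le_self hpos.le (by linarith [(m.cast_nonneg : (0 : ℝ) ≤ m)])
    calc besselICoeff ν (m + 1) ≤ besselICoeff ν m / (m + 1) := hle
      _ ≤ besselICoeff ν 0 / m.factorial / (m + 1) := by gcongr; exact besselICoeff_le hν m
      _ = besselICoeff ν 0 / (m + 1).factorial := by
        rw [Nat.factorial_succ, div_div]; push_cast; ring

theorem summable_norm_besselICoeff_mul_pow {ν : ℝ} (hν : 0 ≤ ν) (t : ℝ) :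
    Summable fun m : ℕ => ‖besselICoeff ν m * t ^ m‖ := by
  refine Summable.of_nonneg_of_le (fun _ => norm_nonneg _) (fun m => ?_)
    ((Real.summable_pow_div_factorial |t|).mul_left (besselICoeff ν 0))
  rw [norm_mul, norm_pow, Real.norm_eq_abs, Real.norm_eq_abs,
    abs_of_pos (besselICoeff_pos (by linarith) m), mul_div_assoc', mul_div_right_comm]
  gcongr
  exact besselICoeff_le hν m

noncomputable def besselIDiffSeries (ν : ℝ) : ℝ⟦X⟧ :=
  mk fun n => if Even n then besselICoeff ν (n / 2) else -besselICoeff (ν + 1) (n / 2)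

theorem coeff_two_mul_besselIDiffSeries (ν : ℝ) (m : ℕ) :
    coeff (2 * m) (besselIDiffSeries ν) = besselICoeff ν m := by
  simp [besselIDiffSeries]

theorem coeff_two_mul_add_one_besselIDiffSeries (ν : ℝ) (m : ℕ) :
    coeff (2 * m + 1) (besselIDiffSeries ν) = -besselICoeff (ν + 1) m := by
  simp [besselIDiffSeries, show (2 * m + 1) / 2 = m by omega]

theorem constantCoeff_besselIDiffSeries (ν : ℝ) :
    constantCoeff (besselIDiffSeries ν) = besselICoeff ν 0 := by
  simp [besselIDiffSeries, ← coeff_zero_eq_constantCoeff_apply]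

/-- With `c := besselICoeff`, the coefficient in degree `2m` is
`2 c ν m - (2m + 1) c (ν + 1) m = c ν m (2ν + 1) / (ν + m + 1)`, and in odd degree it is `0`. -/
theorem coeff_two_mul_besselIDiffSeries_add_derivative_nonneg {ν : ℝ} (hν : -1 / 2 ≤ ν)
    (n : ℕ) : 0 ≤ coeff n (C 2 * besselIDiffSeries ν + d⁄dX ℝ (besselIDiffSeries ν)) := by
  rw [map_add, coeff_C_mul, coeff_derivative]
  obtain ⟨m, rfl | rfl⟩ := Nat.even_or_odd' n
  · have hpos : 0 < ν + m + 1 := by linarith [(m.cast_nonneg : (0 : ℝ) ≤ m)]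
    have key : 2 * besselICoeff ν m - besselICoeff (ν + 1) m * (2 * m + 1) =
        besselICoeff ν m * (2 * ν + 1) / (ν + m + 1) := by
      rw [besselICoeff_add_one hpos.ne']
      field_simp
      ring
    rw [coeff_two_mul_besselIDiffSeries, coeff_two_mul_add_one_besselIDiffSeries]
    push_cast
    rw [neg_mul, ← sub_eq_add_neg, key]
    have := besselICoeff_pos (ν := ν) (by linarith) m
    have : 0 ≤ 2 * ν + 1 := by linarith
    positivity
  · rw [show 2 * m + 1 + 1 = 2 * (m + 1) by ring, coeff_two_mul_add_one_besselIDiffSeries,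
      coeff_two_mul_besselIDiffSeries, besselICoeff_succ]
    push_cast
    refine le_of_eq ?_
    field_simp
    ring

theorem summable_norm_coeff_besselIDiffSeries_mul_pow {ν : ℝ} (hν : 0 ≤ ν) (s : ℝ) :
    Summable fun n => ‖coeff n (besselIDiffSeries ν) * s ^ n‖ := by
  refine Summable.even_add_odd ?_ ?_
  · refine (summable_norm_besselICoeff_mul_pow hν (s ^ 2)).congr fun m => ?_
    rw [coeff_two_mul_besselIDiffSeries, pow_mul]
  · refine ((summable_norm_besselICoeff_mul_pow (ν := ν + 1) (by linarith) (s ^ 2)).mul_left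
      ‖s‖).congr fun m => ?_
    rw [coeff_two_mul_add_one_besselIDiffSeries, pow_succ s (2 * m), pow_mul]
    simp only [norm_mul, norm_neg]
    ring

theorem besselI_sub_besselI_add_one {ν x : ℝ} (hν : 0 ≤ ν) (hx : 0 < x) :
    besselI ν x - besselI (ν + 1) x =
      (x / 2) ^ ν * ∑' n, coeff n (besselIDiffSeries ν) * (x / 2) ^ n := by
  have hsum := (summable_norm_coeff_besselIDiffSeries_mul_pow hν (x / 2)).of_norm
  have heven : ∑' m : ℕ, coeff (2 * m) (besselIDiffSeries ν) * (x / 2) ^ (2 * m) =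
      ∑' m : ℕ, besselICoeff ν m * (x / 2) ^ (2 * m) := by
    simp only [coeff_two_mul_besselIDiffSeries]
  have hodd : ∑' m : ℕ, coeff (2 * m + 1) (besselIDiffSeries ν) * (x / 2) ^ (2 * m + 1) =
      -(x / 2 * ∑' m : ℕ, besselICoeff (ν + 1) m * (x / 2) ^ (2 * m)) := by
    rw [← tsum_mul_left, ← tsum_neg]
    refine tsum_congr fun m => ?_
    rw [coeff_two_mul_add_one_besselIDiffSeries, pow_succ]
    ring
  rw [besselI_eq_rpow_mul_tsum ν hx, besselI_eq_rpow_mul_tsum (ν + 1) hx,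
    Real.rpow_add (by positivity), Real.rpow_one]
  rw [← tsum_even_add_odd (f := fun n => coeff n (besselIDiffSeries ν) * (x / 2) ^ n)
    (hsum.comp_injective (mul_right_injective₀ two_ne_zero))
    (hsum.comp_injective ((add_left_injective 1).comp (mul_right_injective₀ two_ne_zero))),
    heven, hodd]
  ring

theorem besselI_add_one_le_besselI {ν x : ℝ} (hν : 0 ≤ ν) (hx : 0 < x) :
    besselI (ν + 1) x ≤ besselI ν x := by
  have h₀ : 0 ≤ constantCoeff (besselIDiffSeries ν) :=
    constantCoeff_besselIDiffSeries ν ▸ (besselICoeff_pos (by linarith) 0).le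
  have hF := tsum_coeff_mul_pow_nonneg zero_le_two (by positivity : 0 ≤ x / 2) h₀
    (coeff_two_mul_besselIDiffSeries_add_derivative_nonneg (by linarith))
    (summable_norm_coeff_besselIDiffSeries_mul_pow hν _)
  rw [← sub_nonneg, besselI_sub_besselI_add_one hν hx]
  exact mul_nonneg (by positivity) hF

theorem ultraI_succ_le_ultraI {N : ℕ} (hN : 2 ≤ N) (l : ℕ) {x : ℝ} (hx : 0 < x) :
    ultraI N (l + 1) x ≤ ultraI N l x := by
  have hν : 0 ≤ (N : ℝ) / 2 - 1 + l := by
    have : (2 : ℝ) ≤ N := by exact_mod_cast hN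
    linarith [(l.cast_nonneg : (0 : ℝ) ≤ l)]
  rw [ultraI, ultraI, Nat.cast_succ, ← add_assoc]
  exact mul_le_mul_of_nonneg_left (besselI_add_one_le_besselI hν hx) (by positivity)

/-- `I_ν(x) ≥ I_{ν+1}(x)` for `ν ≥ 0`, `x > 0`; consequently
`i_l(x) ≥ i_{l+1}(x)`. -/
theorem besselI_antitone (N : ℕ) (hN : 2 ≤ N) :
    (∀ ν : ℝ, 0 ≤ ν → ∀ x : ℝ, 0 < x → besselI (ν + 1) x ≤ besselI ν x) ∧
    (∀ l : ℕ, ∀ x : ℝ, 0 < x → ultraI N (l + 1) x ≤ ultraI N l x) :=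
  ⟨fun _ hν _ hx => besselI_add_one_le_besselI hν hx, fun l _ hx => ultraI_succ_le_ultraI hN l hx⟩
end

section
/- Let N ≥ 2, τ > 0, and let λ_(2) = 2[5√τ i₃(√τ) + τ i₄(√τ)]⁻¹ · [(10N−2+2τ) i₂(√τ) + (2−10N+(7+10N)√τ−2τ+5τ√τ) i₃(√τ) + τ(8+2N+τ) i₄(√τ) + τ√τ i₅(√τ)], where i_l are the ultraspherical modified Bessel functions. Then λ_(2) ≥ 2τ. -/
noncomputable def bterm (ν x : ℝ) (m : ℕ) : ℝ :=
  (x / 2) ^ (2 * (m : ℝ) + ν) / (m.factorial * Real.Gamma (ν + m + 1))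

lemma bterm_eq (ν x : ℝ) (hx : 0 < x) (m : ℕ) :
    bterm ν x m = (x/2) ^ ν * ((x/2)^2) ^ m / (m.factorial * Real.Gamma (ν + m + 1)) := by
  have ht : (0:ℝ) < x/2 := by linarith
  have h : (2 * (m : ℝ) + ν) = ν + ((2*m : ℕ) : ℝ) := by push_cast; ring
  rw [bterm, h, Real.rpow_add ht, Real.rpow_natCast, pow_mul]

lemma gamma_lb (ν : ℝ) (hν : 0 ≤ ν) (m : ℕ) :
    Real.Gamma (ν + 1) * m.factorial ≤ Real.Gamma (ν + m + 1) := by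
  induction m with
  | zero => simp
  | succ m ih =>
    have hpos : (0:ℝ) < ν + m + 1 := by positivity
    have h1 : Real.Gamma (ν + (m+1 : ℕ) + 1) = (ν + m + 1) * Real.Gamma (ν + m + 1) := by
      rw [show (ν + (m+1 : ℕ) + 1 : ℝ) = (ν + m + 1) + 1 by push_cast; ring,
        Real.Gamma_add_one (ne_of_gt hpos)]
    rw [h1]
    have hG : 0 < Real.Gamma (ν + m + 1) := Real.Gamma_pos_of_pos hpos
    have hf : (0:ℝ) < m.factorial := by positivity
    have hG1 : 0 < Real.Gamma (ν + 1) := Real.Gamma_pos_of_pos (by linarith)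
    calc Real.Gamma (ν+1) * ((m+1 : ℕ).factorial : ℝ)
        = (m+1) * (Real.Gamma (ν+1) * m.factorial) := by
          push_cast [Nat.factorial_succ]; ring
      _ ≤ (ν + m + 1) * Real.Gamma (ν + m + 1) := by
          apply mul_le_mul (by linarith) ih (by positivity) (by linarith)

lemma bterm_nonneg (ν x : ℝ) (hν : 0 ≤ ν) (hx : 0 < x) (m : ℕ) : 0 ≤ bterm ν x m := by
  have hpos : (0:ℝ) < ν + m + 1 := by positivity
  have hG := Real.Gamma_pos_of_pos hpos
  rw [bterm]
  apply div_nonneg (Real.rpow_nonneg (by linarith) _)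
  positivity

lemma bterm_pos0 (ν x : ℝ) (hν : 0 ≤ ν) (hx : 0 < x) : 0 < bterm ν x 0 := by
  have ht : (0:ℝ) < x/2 := by linarith
  have hG := Real.Gamma_pos_of_pos (show (0:ℝ) < ν + (0:ℕ) + 1 by positivity)
  rw [bterm]
  apply div_pos (Real.rpow_pos_of_pos ht _)
  simp only [Nat.factorial_zero, Nat.cast_one, one_mul]
  simpa using hG

lemma summable_bterm (ν x : ℝ) (hν : 0 ≤ ν) (hx : 0 < x) : Summable (bterm ν x) := by
  have ht : (0:ℝ) < x/2 := by linarith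
  have hG1 : 0 < Real.Gamma (ν + 1) := Real.Gamma_pos_of_pos (by linarith)
  have hs : Summable (fun m : ℕ => ((x/2)^ν / Real.Gamma (ν+1)) * (((x/2)^2)^m / m.factorial)) :=
    (Real.summable_pow_div_factorial ((x/2)^2)).mul_left _
  refine hs.of_nonneg_of_le (bterm_nonneg ν x hν hx) ?_
  intro m
  rw [bterm_eq ν x hx]
  have hpos : (0:ℝ) < ν + m + 1 := by positivity
  have hG := Real.Gamma_pos_of_pos hpos
  have hf : (0:ℝ) < m.factorial := by positivity
  have hΓ : Real.Gamma (ν + 1) ≤ Real.Gamma (ν + m + 1) := by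
    have := gamma_lb ν hν m
    have : Real.Gamma (ν+1) * 1 ≤ Real.Gamma (ν+1) * m.factorial := by
      apply mul_le_mul_of_nonneg_left _ (le_of_lt hG1)
      exact_mod_cast Nat.one_le_iff_ne_zero.mpr m.factorial_ne_zero
    linarith [gamma_lb ν hν m]
  have h1 : (x/2)^ν * ((x/2)^2)^m / (m.factorial * Real.Gamma (ν + m + 1))
      ≤ (x/2)^ν * ((x/2)^2)^m / (m.factorial * Real.Gamma (ν + 1)) := by
    apply div_le_div_of_nonneg_left (by positivity) (by positivity)
    exact mul_le_mul_of_nonneg_left hΓ (le_of_lt hf)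
  calc _ ≤ _ := h1
    _ = ((x/2)^ν / Real.Gamma (ν+1)) * (((x/2)^2)^m / m.factorial) := by ring

lemma bterm_key (ν x : ℝ) (hν : 0 ≤ ν) (hx : 0 < x) (m : ℕ) :
    bterm (ν+1) x m ≤ (bterm ν x m + bterm ν x (m+1)) / 2 := by
  have ht : (0:ℝ) < x/2 := by linarith
  have hpos : (0:ℝ) < ν + m + 1 := by positivity
  have hG : 0 < Real.Gamma (ν + m + 1) := Real.Gamma_pos_of_pos hpos
  rw [bterm_eq _ _ hx, bterm_eq _ _ hx, bterm_eq _ _ hx,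
    show Real.Gamma ((ν+1) + m + 1) = (ν + (m:ℝ) + 1) * Real.Gamma (ν + m + 1) by
      rw [show ((ν+1) + m + 1 : ℝ) = (ν + m + 1) + 1 by ring,
        Real.Gamma_add_one (ne_of_gt hpos)],
    show Real.Gamma (ν + ((m+1:ℕ):ℝ) + 1) = (ν + (m:ℝ) + 1) * Real.Gamma (ν + m + 1) by
      rw [show (ν + ((m+1:ℕ):ℝ) + 1 : ℝ) = (ν + m + 1) + 1 by push_cast; ring,
        Real.Gamma_add_one (ne_of_gt hpos)],
    show (x/2) ^ (ν+1) = (x/2) ^ ν * (x/2) by rw [Real.rpow_add ht, Real.rpow_one],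
    Nat.factorial_succ, show ((x/2)^2)^(m+1) = ((x/2)^2)^m * (x/2)^2 from pow_succ _ _]
  push_cast
  set t := x/2 with htdef
  set A := t ^ ν with hAdef
  have hA : 0 < A := Real.rpow_pos_of_pos ht ν
  set G := Real.Gamma (ν + m + 1) with hGdef
  set F := (m.factorial : ℝ) with hFdef
  have hf : (0:ℝ) < F := by positivity
  set S := (t^2)^m with hSdef
  have hS : (0:ℝ) < S := by positivity
  set c := ν + (m:ℝ) + 1 with hcdef
  have hmc : (m:ℝ) + 1 ≤ c := by rw [hcdef]; linarith
  have hm1 : (0:ℝ) < (m:ℝ) + 1 := by positivity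
  clear_value t A G F S c
  -- goal: A*t*S/(F*(c*G)) ≤ (A*S/(F*G) + A*(S*t^2)/(((m:ℝ)+1)*F*(c*G)))/2
  have hD : (0:ℝ) < A * S / (F * G) := by positivity
  have e2 : A * t * S / (F * (c * G)) = (A * S / (F * G)) * (t / c) := by
    field_simp
  have e3 : A * (S * t^2) / (((m:ℝ)+1) * F * (c * G))
      = (A * S / (F * G)) * (t^2 / (((m:ℝ)+1) * c)) := by
    field_simp
  rw [e2, e3]
  have hscalar : t / c ≤ (1 + t^2 / (((m:ℝ)+1) * c)) / 2 := by
    rw [div_le_div_iff₀ hpos two_pos,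
      show (1 + t^2 / (((m:ℝ)+1) * c)) * c = (((m:ℝ)+1) * c + t^2) * c / (((m:ℝ)+1) * c) by
        field_simp]
    rw [le_div_iff₀ (by positivity)]
    nlinarith [sq_nonneg (t - ((m:ℝ)+1)), mul_le_mul_of_nonneg_right hmc (le_of_lt hm1),
      mul_le_mul_of_nonneg_left hmc (le_of_lt hpos), sq_nonneg t, mul_pos hm1 hpos]
  calc (A * S / (F * G)) * (t / c)
      ≤ (A * S / (F * G)) * ((1 + t^2 / (((m:ℝ)+1) * c)) / 2) :=
        mul_le_mul_of_nonneg_left hscalar (le_of_lt hD)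
    _ = (A * S / (F * G) + (A * S / (F * G)) * (t^2 / (((m:ℝ)+1) * c))) / 2 := by ring

lemma besselI_eq_tsum (ν x : ℝ) : besselI ν x = ∑' m, bterm ν x m := rfl

lemma besselI_pos (ν x : ℝ) (hν : 0 ≤ ν) (hx : 0 < x) : 0 < besselI ν x := by
  rw [besselI_eq_tsum]
  exact Summable.tsum_pos (summable_bterm ν x hν hx) (bterm_nonneg ν x hν hx) 0 (bterm_pos0 ν x hν hx)

lemma besselI_succ_le (ν x : ℝ) (hν : 0 ≤ ν) (hx : 0 < x) :
    besselI (ν+1) x ≤ besselI ν x := by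
  rw [besselI_eq_tsum, besselI_eq_tsum]
  have hsa : Summable (bterm ν x) := summable_bterm ν x hν hx
  have hsa' : Summable (fun m => bterm ν x (m+1)) := by
    rwa [summable_nat_add_iff 1]
  have hsb : Summable (bterm (ν+1) x) := summable_bterm (ν+1) x (by linarith) hx
  have h1 : ∑' m, bterm (ν+1) x m ≤ ∑' m, (bterm ν x m + bterm ν x (m+1)) / 2 := by
    refine Summable.tsum_le_tsum (bterm_key ν x hν hx) hsb ?_
    exact ((hsa.add hsa').div_const 2)
  have h2 : ∑' m, (bterm ν x m + bterm ν x (m+1)) / 2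
      = (∑' m, bterm ν x m + ∑' m, bterm ν x (m+1)) / 2 := by
    rw [← Summable.tsum_add hsa hsa', tsum_div_const]
  have h3 : ∑' m, bterm ν x m = bterm ν x 0 + ∑' m, bterm ν x (m+1) :=
    Summable.tsum_eq_zero_add hsa
  have h0 := bterm_nonneg ν x hν hx 0
  linarith

lemma ultraI_pos (N : ℕ) (hN : 2 ≤ N) (l : ℕ) (z : ℝ) (hz : 0 < z) :
    0 < ultraI N l z := by
  have hν : (0:ℝ) ≤ (N : ℝ) / 2 - 1 + l := by
    have : (2:ℝ) ≤ N := by exact_mod_cast hN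
    have : (0:ℝ) ≤ l := Nat.cast_nonneg l
    linarith
  exact mul_pos (Real.rpow_pos_of_pos hz _) (besselI_pos _ z hν hz)

lemma ultraI_succ_le (N : ℕ) (hN : 2 ≤ N) (l : ℕ) (z : ℝ) (hz : 0 < z) :
    ultraI N (l+1) z ≤ ultraI N l z := by
  have hν : (0:ℝ) ≤ (N : ℝ) / 2 - 1 + l := by
    have : (2:ℝ) ≤ N := by exact_mod_cast hN
    have : (0:ℝ) ≤ l := Nat.cast_nonneg l
    linarith
  have h : ((N : ℝ) / 2 - 1 + ((l+1:ℕ):ℝ)) = ((N : ℝ) / 2 - 1 + l) + 1 := by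
    push_cast; ring
  unfold ultraI
  rw [h]
  exact mul_le_mul_of_nonneg_left (besselI_succ_le _ z hν hz)
    (le_of_lt (Real.rpow_pos_of_pos hz _))

/-- the second positive Steklov eigenvalue of the unit ball,
`λ_(2) = 2[5√τ i₃(√τ) + τ i₄(√τ)]⁻¹ [(10N−2+2τ) i₂(√τ) + (2−10N+(7+10N)√τ−2τ+5τ√τ) i₃(√τ)
+ τ(8+2N+τ) i₄(√τ) + τ√τ i₅(√τ)]`, satisfies `λ_(2) ≥ 2τ`. -/
theorem lambda_two_ball_lower_bound (N : ℕ) (hN : 2 ≤ N) (τ : ℝ) (hτ : 0 < τ) :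
    2 * (5 * Real.sqrt τ * ultraI N 3 (Real.sqrt τ) + τ * ultraI N 4 (Real.sqrt τ))⁻¹ *
      ((10 * (N : ℝ) - 2 + 2 * τ) * ultraI N 2 (Real.sqrt τ)
        + (2 - 10 * (N : ℝ) + (7 + 10 * (N : ℝ)) * Real.sqrt τ - 2 * τ
            + 5 * τ * Real.sqrt τ) * ultraI N 3 (Real.sqrt τ)
        + τ * (8 + 2 * (N : ℝ) + τ) * ultraI N 4 (Real.sqrt τ)
        + τ * Real.sqrt τ * ultraI N 5 (Real.sqrt τ))
      ≥ 2 * τ := by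
  have hs : 0 < Real.sqrt τ := Real.sqrt_pos.mpr hτ
  have hNR : (2:ℝ) ≤ N := by exact_mod_cast hN
  set z := Real.sqrt τ with hz
  have hi2 : 0 < ultraI N 2 z := ultraI_pos N hN 2 z hs
  have hi3 : 0 < ultraI N 3 z := ultraI_pos N hN 3 z hs
  have hi4 : 0 < ultraI N 4 z := ultraI_pos N hN 4 z hs
  have hi5 : 0 < ultraI N 5 z := ultraI_pos N hN 5 z hs
  have h23 : ultraI N 3 z ≤ ultraI N 2 z := ultraI_succ_le N hN 2 z hs
  have hA : 0 < 5 * z * ultraI N 3 z + τ * ultraI N 4 z := by positivity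
  rw [ge_iff_le, show 2 * (5 * z * ultraI N 3 z + τ * ultraI N 4 z)⁻¹ *
      ((10 * (N : ℝ) - 2 + 2 * τ) * ultraI N 2 z
        + (2 - 10 * (N : ℝ) + (7 + 10 * (N : ℝ)) * z - 2 * τ + 5 * τ * z) * ultraI N 3 z
        + τ * (8 + 2 * (N : ℝ) + τ) * ultraI N 4 z
        + τ * z * ultraI N 5 z)
      = 2 * ((10 * (N : ℝ) - 2 + 2 * τ) * ultraI N 2 z
        + (2 - 10 * (N : ℝ) + (7 + 10 * (N : ℝ)) * z - 2 * τ + 5 * τ * z) * ultraI N 3 z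
        + τ * (8 + 2 * (N : ℝ) + τ) * ultraI N 4 z
        + τ * z * ultraI N 5 z) / (5 * z * ultraI N 3 z + τ * ultraI N 4 z) by
        field_simp, le_div_iff₀ hA]
  nlinarith [mul_le_mul_of_nonneg_left h23 (show (0:ℝ) ≤ 10 * (N:ℝ) - 2 + 2 * τ by linarith),
    mul_pos hs hi3, mul_pos hτ hi4, mul_pos (mul_pos hτ hs) hi5,
    mul_pos (mul_pos hτ hs) hi3, mul_pos hτ hi3]
end
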